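/- arXiv:2409.02933 — 8 statements merged into one kernel-verified Lean document; each statement's English description precedes it below -/
import Mathlib

section
/- For every odd integer n ≥ 2, 1 + ((F_n^2 - 3)/2)·F_n^2 + ((F_n^2 - F_{n-1}^2 - 1)/2)·F_{n+1}^2 = (F_n^2 - 1)(F_{n+1}^2 - 1)/2, where all divisions by 2 are exact. -/
lemma cassini (m : ℕ) : (Nat.fib m : ℤ) * Nat.fib (m+2) = (Nat.fib (m+1):ℤ)^2 + (-1)^(m+1) := by
  induction m with
  | zero => simp
  | succ k ih =>
    have h1 : (Nat.fib (k+3) : ℤ) = Nat.fib (k+1) + Nat.fib (k+2) := by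
      exact_mod_cast Nat.fib_add_two
    have h2 : (Nat.fib (k+2) : ℤ) = Nat.fib k + Nat.fib (k+1) := by
      exact_mod_cast Nat.fib_add_two
    have : ((-1:ℤ))^(k+2) = -(-1)^(k+1) := by ring
    rw [show k+1+2 = k+3 from rfl, h1, this]
    nlinarith [ih, h2]

theorem stmt0 (n : ℕ) (hn : 2 ≤ n) (hodd : Odd n) :
    2 + ((Nat.fib n : ℤ)^2 - 3) * (Nat.fib n : ℤ)^2
      + ((Nat.fib n : ℤ)^2 - (Nat.fib (n-1) : ℤ)^2 - 1) * (Nat.fib (n+1) : ℤ)^2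
    = ((Nat.fib n : ℤ)^2 - 1) * ((Nat.fib (n+1) : ℤ)^2 - 1) := by
  obtain ⟨k, hk⟩ := hodd
  subst hk
  have h := cassini (2*k)
  have hpow : ((-1:ℤ))^(2*k+1) = -1 := by
    simp [pow_succ, pow_mul]
  rw [hpow] at h
  have e1 : 2*k+1-1 = 2*k := by omega
  have e2 : 2*k+1+1 = 2*k+2 := by omega
  rw [e1, e2]
  set a := (Nat.fib (2*k) : ℤ)
  set b := (Nat.fib (2*k+1) : ℤ)
  set c := (Nat.fib (2*k+2) : ℤ)
  linear_combination -(b^2 - 1 + a*c) * h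
end

section
/- For every integer n ≥ 2, (2F_n^2 - F_{n-1}^2 - 1)·F_n^2 + (F_{n-1}^2 - 1)·F_{n+1}^2 = (F_n^2 - 1)(F_{n+1}^2 - 1). -/
lemma cassini_sq (m : ℕ) :
    ((Nat.fib m : ℤ) * Nat.fib (m+2) - (Nat.fib (m+1) : ℤ)^2)^2 = 1 := by
  induction m with
  | zero => simp
  | succ k ih =>
    have h : (Nat.fib (k+3) : ℤ) = Nat.fib (k+1) + Nat.fib (k+2) := by
      rw [Nat.fib_add_two]; push_cast; ring
    have h2 : (Nat.fib (k+2) : ℤ) = Nat.fib k + Nat.fib (k+1) := by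
      rw [Nat.fib_add_two]; push_cast; ring
    have : (Nat.fib (k+1) : ℤ) * Nat.fib (k+3) - (Nat.fib (k+2) : ℤ)^2
        = -((Nat.fib k : ℤ) * Nat.fib (k+2) - (Nat.fib (k+1) : ℤ)^2) := by
      rw [h, h2]; ring
    rw [this, neg_sq, ih]

theorem stmt2 (n : ℕ) (hn : 2 ≤ n) :
    (2 * (Nat.fib n : ℤ)^2 - (Nat.fib (n-1) : ℤ)^2 - 1) * (Nat.fib n : ℤ)^2
      + ((Nat.fib (n-1) : ℤ)^2 - 1) * (Nat.fib (n+1) : ℤ)^2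
    = ((Nat.fib n : ℤ)^2 - 1) * ((Nat.fib (n+1) : ℤ)^2 - 1) := by
  obtain ⟨m, rfl⟩ : ∃ m, n = m + 2 := ⟨n - 2, by omega⟩
  have e : m + 2 - 1 = m + 1 := rfl
  rw [e]
  have hc := cassini_sq (m+1)
  have h : (Nat.fib (m+3) : ℤ) = Nat.fib (m+1) + Nat.fib (m+2) := by
    rw [Nat.fib_add_two]; push_cast; ring
  rw [show m+2+1 = m+3 from rfl, h]
  rw [show m+1+2 = m+3 from rfl, show m+1+1 = m+2 from rfl, h] at hc
  linear_combination hc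
end

section
/- For every integer m ≥ 2, 2 + 2·(∑_{k=1}^{2m} (-1)^k F_k^3 - 1)·F_{2m}^3 + 2·(∑_{k=2}^{2m-1} F_k^3)·F_{2m+1}^3 = (F_{2m}^3 - 1)(F_{2m+1}^3 - 1). -/
open Finset

private lemma fibid (m : ℕ) :
    (Nat.fib (2*m+1) : ℤ)^2 - (Nat.fib (2*m+1) : ℤ) * (Nat.fib (2*m) : ℤ)
      - (Nat.fib (2*m) : ℤ)^2 = 1 := by
  induction m with
  | zero => simp
  | succ n ih =>
    have h1 : 2*(n+1) = 2*n+2 := by ring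
    rw [h1, show 2*n+2+1 = (2*n+1)+2 from rfl, Nat.fib_add_two, Nat.fib_add_two]
    push_cast
    linear_combination ih

private lemma Ssum (m : ℕ) (hm : 1 ≤ m) :
    2 * (∑ k ∈ Finset.Icc 1 (2*m), (-1:ℤ)^k * (Nat.fib k : ℤ)^3)
      = (Nat.fib (2*m) : ℤ)^2 * (Nat.fib (2*m+1) : ℤ)
        - (Nat.fib (2*m) : ℤ) - (Nat.fib (2*m+1) : ℤ) + 1 := by
  induction m with
  | zero => omega
  | succ n ih =>
    rcases Nat.eq_or_lt_of_le hm with h | h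
    · -- m = 1
      have : n = 0 := by omega
      subst this
      decide
    · have hn : 1 ≤ n := by omega
      have e1 : 2*(n+1) = (2*n+1) + 1 := by ring
      have e2 : 2*n+1 = (2*n) + 1 := rfl
      rw [e1, Finset.sum_Icc_succ_top (by omega), e2, Finset.sum_Icc_succ_top (by omega)]
      have hfib := fibid n
      have f4 : (Nat.fib (2*n+1+1) : ℤ) = (Nat.fib (2*n) : ℤ) + (Nat.fib (2*n+1) : ℤ) := by
        have : 2*n+1+1 = 2*n+2 := rfl
        rw [this, Nat.fib_add_two]; push_cast; ring
      have f5 : (Nat.fib (2*n+1+1+1) : ℤ) = (Nat.fib (2*n) : ℤ) + 2*(Nat.fib (2*n+1) : ℤ) := by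
        have : 2*n+1+1+1 = (2*n+1)+2 := rfl
        rw [this, Nat.fib_add_two]
        have : 2*n+1+1 = 2*n+2 := rfl
        rw [this, Nat.fib_add_two]; push_cast; ring
      rw [f5, f4]
      have hpow1 : (-1:ℤ)^(2*n+1) = -1 := by
        rw [pow_succ, pow_mul]; norm_num
      have hpow2 : (-1:ℤ)^(2*n+1+1) = 1 := by
        rw [pow_succ, hpow1]; norm_num
      rw [hpow1, hpow2]
      specialize ih hn
      linear_combination ih - ((Nat.fib (2*n):ℤ) + 2*(Nat.fib (2*n+1):ℤ)) * hfib

private lemma Tsum (m : ℕ) (hm : 1 ≤ m) :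
    2 * (∑ k ∈ Finset.Icc 2 (2*m-1), (Nat.fib k : ℤ)^3)
      = (Nat.fib (2*m) : ℤ)^2 * (Nat.fib (2*m+1) : ℤ) - (Nat.fib (2*m) : ℤ)^3
        + 2 * (Nat.fib (2*m) : ℤ) - (Nat.fib (2*m+1) : ℤ) - 1 := by
  induction m with
  | zero => omega
  | succ n ih =>
    rcases Nat.eq_or_lt_of_le hm with h | h
    · have : n = 0 := by omega
      subst this
      decide
    · have hn : 1 ≤ n := by omega
      have e1 : 2*(n+1)-1 = (2*n) + 1 := by omega
      have e2 : 2*n = (2*n-1) + 1 := by omega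
      rw [e1, Finset.sum_Icc_succ_top (by omega), e2, Finset.sum_Icc_succ_top (by omega), ← e2]
      have hfib := fibid n
      have f1 : (Nat.fib (2*(n+1)) : ℤ) = (Nat.fib (2*n) : ℤ) + (Nat.fib (2*n+1) : ℤ) := by
        have : 2*(n+1) = 2*n + 2 := by ring
        rw [this, Nat.fib_add_two]; push_cast; ring
      have f2 : (Nat.fib (2*(n+1)+1) : ℤ) = (Nat.fib (2*n) : ℤ) + 2 * (Nat.fib (2*n+1) : ℤ) := by
        have : 2*(n+1)+1 = (2*n+1) + 2 := by ring
        rw [this, Nat.fib_add_two]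
        have : 2*n+1+1 = 2*n+2 := rfl
        rw [this, Nat.fib_add_two]; push_cast; ring
      have f4 : (Nat.fib (2*n+1) : ℤ) = (Nat.fib (2*n+1) : ℤ) := rfl
      rw [f1, f2]
      specialize ih hn
      linear_combination ih + ((Nat.fib (2*n+1):ℤ) - (Nat.fib (2*n):ℤ)) * hfib

theorem stmt5 (m : ℕ) (hm : 2 ≤ m) :
    2 + 2 * ((∑ k ∈ Finset.Icc 1 (2*m), (-1:ℤ)^k * (Nat.fib k : ℤ)^3) - 1) * (Nat.fib (2*m) : ℤ)^3
      + 2 * (∑ k ∈ Finset.Icc 2 (2*m-1), (Nat.fib k : ℤ)^3) * (Nat.fib (2*m+1) : ℤ)^3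
    = ((Nat.fib (2*m) : ℤ)^3 - 1) * ((Nat.fib (2*m+1) : ℤ)^3 - 1) := by
  have hm1 : 1 ≤ m := by omega
  have hS := Ssum m hm1
  have hT := Tsum m hm1
  have hfib := fibid m
  set a := (Nat.fib (2*m) : ℤ)
  set b := (Nat.fib (2*m+1) : ℤ)
  linear_combination a^3 * hS + b^3 * hT
    + (a^2*b^2 - b^2 - a^3*b + a*b + a^2 - 1) * hfib
end

section
/- For every integer m ≥ 1, the identity (F_{6m} - F_{6m-3})·F_{2m-1}^3 + 4·F_{2m-1}^6 + (F_{6m-3} + F_{6m-6})·F_{2m}^3 - 4·F_{2m-2}^3·F_{2m}^3 - 10·F_{2m-1}^3·F_{2m}^3 = 2 holds. -/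
lemma cassini_even (k : ℕ) :
    (Nat.fib (2*k+1) : ℤ)^2 - (Nat.fib (2*k+1) : ℤ) * (Nat.fib (2*k) : ℤ)
      - (Nat.fib (2*k) : ℤ)^2 = 1 := by
  induction k with
  | zero => simp
  | succ n ih =>
    have h1 : 2*(n+1)+1 = (2*n+1)+2 := by ring
    have h2 : 2*(n+1) = (2*n)+2 := by ring
    rw [h1, h2, Nat.fib_add_two, Nat.fib_add_two]
    push_cast
    linear_combination ih

theorem stmt6 (m : ℕ) (hm : 1 ≤ m) :
    ((Nat.fib (6*m) : ℤ) - (Nat.fib (6*m-3) : ℤ)) * (Nat.fib (2*m-1) : ℤ)^3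
      + 4 * (Nat.fib (2*m-1) : ℤ)^6
      + ((Nat.fib (6*m-3) : ℤ) + (Nat.fib (6*m-6) : ℤ)) * (Nat.fib (2*m) : ℤ)^3
      - 4 * (Nat.fib (2*m-2) : ℤ)^3 * (Nat.fib (2*m) : ℤ)^3
      - 10 * (Nat.fib (2*m-1) : ℤ)^3 * (Nat.fib (2*m) : ℤ)^3 = 2 := by
  obtain ⟨k, rfl⟩ := Nat.exists_eq_add_of_le hm
  have e1 : 6*(1+k) = 6*k+6 := by ring
  have e2 : 6*(1+k)-3 = 6*k+3 := by omega
  have e3 : 6*(1+k)-6 = 6*k := by omega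
  have e4 : 2*(1+k)-1 = 2*k+1 := by omega
  have e5 : 2*(1+k) = 2*k+2 := by ring
  have e6 : 2*(1+k)-2 = 2*k := by omega
  rw [e2, e3, e4, e6, e1, e5]
  set A : ℤ := (Nat.fib (2*k) : ℤ) with hA
  set B : ℤ := (Nat.fib (2*k+1) : ℤ) with hB
  have hc : B^2 - B*A - A^2 = 1 := cassini_even k
  have hC : (Nat.fib (2*k+2) : ℤ) = A + B := by
    rw [Nat.fib_add_two]; push_cast; ring
  have h41 : (Nat.fib (4*k+1) : ℤ) = A^2 + B^2 := by
    have : 4*k+1 = 2*k + (2*k) + 1 := by ring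
    rw [this, Nat.fib_add]; push_cast [hA, hB]; ring
  have h42 : (Nat.fib (4*k+2) : ℤ) = A*B + B*(A+B) := by
    have : 4*k+2 = 2*k + (2*k+1) + 1 := by ring
    rw [this, Nat.fib_add]
    have : 2*k+1+1 = 2*k+2 := by ring
    rw [this]
    push_cast [hC]
    ring
  have h40 : (Nat.fib (4*k) : ℤ) = (Nat.fib (4*k+2) : ℤ) - (Nat.fib (4*k+1) : ℤ) := by
    rw [Nat.fib_add_two]; push_cast; ring
  have h61 : (Nat.fib (6*k+1) : ℤ) = (Nat.fib (4*k) : ℤ) * A + (Nat.fib (4*k+1) : ℤ) * B := by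
    have : 6*k+1 = 4*k + (2*k) + 1 := by ring
    rw [this, Nat.fib_add]; push_cast; ring
  have h62 : (Nat.fib (6*k+2) : ℤ) = (Nat.fib (4*k+1) : ℤ) * A + (Nat.fib (4*k+2) : ℤ) * B := by
    have h : 6*k+2 = (4*k+1) + (2*k) + 1 := by ring
    rw [h, Nat.fib_add]
    have : 4*k+1+1 = 4*k+2 := by ring
    rw [this]; push_cast; ring
  have h60 : (Nat.fib (6*k) : ℤ) = (Nat.fib (6*k+2) : ℤ) - (Nat.fib (6*k+1) : ℤ) := by
    rw [Nat.fib_add_two]; push_cast; ring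
  have h63 : (Nat.fib (6*k+3) : ℤ) = (Nat.fib (6*k+1) : ℤ) + (Nat.fib (6*k+2) : ℤ) := by
    have : 6*k+3 = (6*k+1)+2 := by ring
    rw [this, Nat.fib_add_two]; push_cast; ring
  have h64 : (Nat.fib (6*k+4) : ℤ) = (Nat.fib (6*k+2) : ℤ) + (Nat.fib (6*k+3) : ℤ) := by
    have : 6*k+4 = (6*k+2)+2 := by ring
    rw [this, Nat.fib_add_two]; push_cast; ring
  have h65 : (Nat.fib (6*k+5) : ℤ) = (Nat.fib (6*k+3) : ℤ) + (Nat.fib (6*k+4) : ℤ) := by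
    have : 6*k+5 = (6*k+3)+2 := by ring
    rw [this, Nat.fib_add_two]; push_cast; ring
  have h66 : (Nat.fib (6*k+6) : ℤ) = (Nat.fib (6*k+4) : ℤ) + (Nat.fib (6*k+5) : ℤ) := by
    have : 6*k+6 = (6*k+4)+2 := by ring
    rw [this, Nat.fib_add_two]; push_cast; ring
  rw [h66, h65, h64, h63, h60, h62, h61, h40, h42, h41, hC]
  linear_combination (2 + 2*B^2 + 2*B^4 - 2*A*B - 4*A*B^3 - 2*A^2 - 2*A^2*B^2
    + 4*A^3*B + 2*A^4) * hc
end

section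
/- For every integer n ≥ 1, 4·∑_{k=1}^{n} F_k^3 = F_{3n+3} + F_{3n} - 4·F_{n+1}^3 - 4·F_n^3 + 2. -/
lemma fib6 (m : ℕ) : Nat.fib (m+6) = 4 * Nat.fib (m+3) + Nat.fib m := by
  simp [Nat.fib_add_two (n := m+4), Nat.fib_add_two (n := m+3),
    Nat.fib_add_two (n := m+2), Nat.fib_add_two (n := m+1),
    Nat.fib_add_two (n := m)]
  ring

lemma AB (n : ℕ) :
    (Nat.fib (3*n) : ℤ) = (Nat.fib (n+1):ℤ)^3 + (Nat.fib n:ℤ)^3 - ((Nat.fib (n+1):ℤ) - Nat.fib n)^3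
    ∧ (Nat.fib (3*n+3) : ℤ) = (Nat.fib (n+2):ℤ)^3 + (Nat.fib (n+1):ℤ)^3 - (Nat.fib n:ℤ)^3 := by
  induction n with
  | zero => norm_num [Nat.fib]
  | succ n ih =>
    obtain ⟨hB, hA⟩ := ih
    have h2 : (Nat.fib (n+2) : ℤ) = Nat.fib (n+1) + Nat.fib n := by
      rw [Nat.fib_add_two]; push_cast; ring
    have h3 : (Nat.fib (n+3) : ℤ) = Nat.fib (n+2) + Nat.fib (n+1) := by
      rw [Nat.fib_add_two (n := n+1)]; push_cast; ring
    have h6 : (Nat.fib (3*n+6) : ℤ) = 4 * Nat.fib (3*n+3) + Nat.fib (3*n) := by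
      have := fib6 (3*n); exact_mod_cast congrArg (Nat.cast : ℕ → ℤ) this
    constructor
    · have : 3*(n+1) = 3*n+3 := by ring
      rw [this, hA, h2]; ring
    · have : 3*(n+1)+3 = 3*n+6 := by ring
      rw [this, h6, hA, hB, h3, h2]; ring

theorem stmt8 (n : ℕ) (hn : 1 ≤ n) :
    4 * (∑ k ∈ Finset.Icc 1 n, (Nat.fib k : ℤ)^3)
    = (Nat.fib (3*n+3) : ℤ) + (Nat.fib (3*n) : ℤ)
      - 4 * (Nat.fib (n+1) : ℤ)^3 - 4 * (Nat.fib n : ℤ)^3 + 2 := by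
  induction n, hn using Nat.le_induction with
  | base => norm_num [Nat.fib]
  | succ n hn ih =>
    rw [Finset.sum_Icc_succ_top (by omega : 1 ≤ n+1), mul_add, ih]
    obtain ⟨hB, hA⟩ := AB n
    obtain ⟨hB', hA'⟩ := AB (n+1)
    have h2 : (Nat.fib (n+2) : ℤ) = Nat.fib (n+1) + Nat.fib n := by
      rw [Nat.fib_add_two]; push_cast; ring
    have h3 : (Nat.fib (n+3) : ℤ) = Nat.fib (n+2) + Nat.fib (n+1) := by
      rw [Nat.fib_add_two (n := n+1)]; push_cast; ring
    have e1 : 3*(n+1)+3 = 3*n+6 := by ring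
    have e2 : 3*(n+1) = 3*n+3 := by ring
    simp only [e1, e2, show n+1+1=n+2 from rfl, show n+1+2=n+3 from rfl,
      show 3*n+3+3 = 3*n+6 from rfl] at hA' hB' ⊢
    rw [hA', hB', hB, h3, h2]
    ring
end

section
/- For every integer n ≥ 1, 4·∑_{k=1}^{n} (-1)^k F_k^3 = (-1)^n F_{3n+3} + (-1)^{n+1} F_{3n} - 4·(-1)^n F_{n+1}^3 - 4·(-1)^{n+1} F_n^3 + 2, as an identity of integers. -/
lemma fib_cast_add_two (m : ℕ) : (Nat.fib (m+2) : ℤ) = Nat.fib (m+1) + Nat.fib m := by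
  rw [Nat.fib_add_two]; push_cast; ring

lemma key (n : ℕ) : (Nat.fib (3*n+6) : ℤ)
    = Nat.fib (3*n) + 4*((Nat.fib (n+2):ℤ)^3 + (Nat.fib (n+1):ℤ)^3 - (Nat.fib n:ℤ)^3) := by
  have h1 := Nat.fib_add n n
  have h2 := Nat.fib_add (n+1) n
  have h3 := Nat.fib_add n (2*n+1)
  have h4 := Nat.fib_add (n+1) (2*n+1)
  have e1 : n + n + 1 = 2*n+1 := by ring
  have e2 : n + 1 + n + 1 = 2*n+2 := by ring
  have e3 : n + (2*n+1) + 1 = 3*n+2 := by ring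
  have e4 : n + 1 + (2*n+1) + 1 = 3*n+3 := by ring
  rw [e1] at h1; rw [e2] at h2; rw [e3] at h3; rw [e4] at h4
  have c1 : (Nat.fib (2*n+1) : ℤ) = Nat.fib n * Nat.fib n + Nat.fib (n+1) * Nat.fib (n+1) := by
    exact_mod_cast congrArg (Nat.cast : ℕ → ℤ) h1
  have c2 : (Nat.fib (2*n+2) : ℤ) = Nat.fib (n+1) * Nat.fib n + Nat.fib (n+2) * Nat.fib (n+1) := by
    exact_mod_cast congrArg (Nat.cast : ℕ → ℤ) h2
  have c3 : (Nat.fib (3*n+2) : ℤ) = Nat.fib n * Nat.fib (2*n+1) + Nat.fib (n+1) * Nat.fib (2*n+2) := by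
    exact_mod_cast congrArg (Nat.cast : ℕ → ℤ) h3
  have c4 : (Nat.fib (3*n+3) : ℤ) = Nat.fib (n+1) * Nat.fib (2*n+1) + Nat.fib (n+2) * Nat.fib (2*n+2) := by
    exact_mod_cast congrArg (Nat.cast : ℕ → ℤ) h4
  have f2 : (Nat.fib (n+2) : ℤ) = Nat.fib (n+1) + Nat.fib n := fib_cast_add_two n
  -- express fib (3n), fib(3n+1), ... fib(3n+6)
  have g0 : (Nat.fib (3*n+2) : ℤ) = Nat.fib (3*n+1) + Nat.fib (3*n) := by
    have := fib_cast_add_two (3*n); linarith [this]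
  have g1 : (Nat.fib (3*n+3) : ℤ) = Nat.fib (3*n+2) + Nat.fib (3*n+1) := by
    have := fib_cast_add_two (3*n+1); linarith [this]
  have g2 : (Nat.fib (3*n+4) : ℤ) = Nat.fib (3*n+3) + Nat.fib (3*n+2) := by
    have := fib_cast_add_two (3*n+2); linarith [this]
  have g3 : (Nat.fib (3*n+5) : ℤ) = Nat.fib (3*n+4) + Nat.fib (3*n+3) := by
    have := fib_cast_add_two (3*n+3); linarith [this]
  have g4 : (Nat.fib (3*n+6) : ℤ) = Nat.fib (3*n+5) + Nat.fib (3*n+4) := by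
    have := fib_cast_add_two (3*n+4); linarith [this]
  have h0 : (Nat.fib (3*n) : ℤ) = 2 * Nat.fib (3*n+2) - Nat.fib (3*n+3) := by linarith
  rw [g4, g3, g2, h0, c4, c3, c2, c1, f2]; ring

theorem stmt9 (n : ℕ) (hn : 1 ≤ n) :
    4 * (∑ k ∈ Finset.Icc 1 n, (-1:ℤ)^k * (Nat.fib k : ℤ)^3)
    = (-1:ℤ)^n * (Nat.fib (3*n+3) : ℤ) + (-1:ℤ)^(n+1) * (Nat.fib (3*n) : ℤ)
      - 4 * (-1:ℤ)^n * (Nat.fib (n+1) : ℤ)^3 - 4 * (-1:ℤ)^(n+1) * (Nat.fib n : ℤ)^3 + 2 := by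
  induction n with
  | zero => omega
  | succ m ih =>
    rcases Nat.eq_or_lt_of_le hn with h | h
    · simp [← h]; decide
    · have hm : 1 ≤ m := by omega
      have ihm := ih hm
      have h33 : 3*(m+1) = 3*m+3 := by ring
      have h36 : 3*(m+1)+3 = 3*m+6 := by ring
      rw [Finset.sum_Icc_succ_top (by omega : 1 ≤ m + 1), h36, h33, key m, mul_add, ihm]
      ring
end

section
/- Let a, b be coprime positive integers with b ≥ 2 and a odd. Then exactly one of the two equations a·x + b·y = (a+1)·b/2 + 1 and a·x + b·y = (a+1)·b/2 - 1 has a solution in positive integers x, y, and moreover that solution is unique. -/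
/-!
Write `N = (a+1)b/2`, a multiple of `b` with `2N = ab + b`, and let `x₁ ∈ [1, b)` be the inverse of
`a` modulo `b`. A number `M` has a positive representation `ax + by = M` iff `a x₀ < M`, where `x₀`
is the least positive residue of `M / a` modulo `b`; for `N + 1` this residue is `x₁`, for `N - 1` it
is `b - x₁`, and `a x₁ < N + 1` decides which of the two is representable. Both cannot be, since two
positive representations summing to `ab + b` would force `b ∣ x + x'`. Uniqueness holds because two
positive representations of the same `M` differ by a multiple of `(b, -a)`, which forces
`M ≥ ab + a + b`.
-/

namespace Nat

variable {a b : ℕ}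

theorem exists_pos_mul_modEq_one (hcop : a.Coprime b) (hb : 1 < b) :
    ∃ x, 1 ≤ x ∧ x < b ∧ a * x ≡ 1 [MOD b] := by
  obtain ⟨x, hxb, hx⟩ := exists_mul_mod_eq_one_of_coprime hcop hb
  refine ⟨x, Nat.pos_of_ne_zero (by rintro rfl; simp at hx), hxb, ?_⟩
  rwa [ModEq, mod_eq_of_lt hb]

theorem exists_pos_repr_iff {M x₀ : ℕ} (hcop : a.Coprime b) (hx₀ : 1 ≤ x₀) (hx₀b : x₀ ≤ b)
    (hM : a * x₀ ≡ M [MOD b]) :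
    (∃ x y : ℕ, 1 ≤ x ∧ 1 ≤ y ∧ a * x + b * y = M) ↔ a * x₀ < M := by
  constructor
  · rintro ⟨x, y, hx, hy, rfl⟩
    have hxx₀ : x ≡ x₀ [MOD b] := by
      refine ModEq.cancel_left_of_coprime hcop.symm ?_
      have : a * x + b * y ≡ a * x + 0 [MOD b] :=
        (modEq_zero_iff_dvd.2 (dvd_mul_right b y)).add_left (a * x)
      exact this.symm.trans hM.symm
    have hle : x₀ ≤ x := by
      by_contra! hlt
      have hdvd := (modEq_iff_dvd' hlt.le).1 hxx₀
      have := le_of_dvd (by omega) hdvd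
      omega
    have : a * x₀ ≤ a * x := mul_le_mul_left a hle
    have : b ≤ b * y := Nat.le_mul_of_pos_right b hy
    omega
  · intro hlt
    obtain ⟨y, hy⟩ := (modEq_iff_dvd' hlt.le).1 hM
    refine ⟨x₀, y, hx₀, ?_, by omega⟩
    exact Nat.pos_of_ne_zero (by rintro rfl; omega)

theorem pos_repr_fst_le {M x y x' y' : ℕ} (hcop : a.Coprime b) (hM : M < a * b + a + b)
    (hx : 1 ≤ x) (hy' : 1 ≤ y') (h : a * x + b * y = M) (h' : a * x' + b * y' = M) :
    x' ≤ x := by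
  by_contra! hlt
  have hdvd : b ∣ x' - x := by
    refine hcop.symm.dvd_of_dvd_mul_left ⟨y - y', ?_⟩
    rw [Nat.mul_sub, Nat.mul_sub]
    omega
  have hb : b ≤ x' - x := le_of_dvd (by omega) hdvd
  have : a * (b + 1) ≤ a * x' := mul_le_mul_left a (by omega)
  have : b ≤ b * y' := Nat.le_mul_of_pos_right b hy'
  nlinarith

theorem existsUnique_pos_repr {M : ℕ} (hcop : a.Coprime b) (hb : 1 ≤ b)
    (hM : M < a * b + a + b) (h : ∃ x y : ℕ, 1 ≤ x ∧ 1 ≤ y ∧ a * x + b * y = M) :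
    ∃! p : ℕ × ℕ, 1 ≤ p.1 ∧ 1 ≤ p.2 ∧ a * p.1 + b * p.2 = M := by
  obtain ⟨x, y, hx, hy, hxy⟩ := h
  refine ⟨(x, y), ⟨hx, hy, hxy⟩, ?_⟩
  rintro ⟨x', y'⟩ ⟨hx', hy', hxy'⟩
  dsimp only at hx' hy' hxy'
  obtain rfl : x' = x :=
    le_antisymm (pos_repr_fst_le hcop hM hx hy' hxy hxy') (pos_repr_fst_le hcop hM hx' hy hxy' hxy)
  obtain rfl : y' = y := Nat.eq_of_mul_eq_mul_left hb (by omega)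
  rfl

theorem pos_repr_add_ne {x y x' y' : ℕ} (hcop : a.Coprime b) (hx : 1 ≤ x) (hy : 1 ≤ y)
    (hx' : 1 ≤ x') (hy' : 1 ≤ y') : a * x + b * y + (a * x' + b * y') ≠ a * b + b := by
  intro h
  have hsum : a * (x + x') + b * (y + y') = b * (a + 1) := by linarith
  have hdvd : b ∣ x + x' := by
    refine hcop.symm.dvd_of_dvd_mul_left ((Nat.dvd_add_left (dvd_mul_right b (y + y'))).1 ?_)
    rw [hsum]
    exact dvd_mul_right b _
  obtain ⟨k, hk⟩ := hdvd
  have hk1 : 1 ≤ k := Nat.pos_of_ne_zero (by rintro rfl; omega)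
  have : a * b ≤ a * (x + x') := hk ▸ mul_le_mul_left a (Nat.le_mul_of_pos_right b hk1)
  have : b * 2 ≤ b * (y + y') := mul_le_mul_left b (by omega)
  have : 0 < b := Nat.pos_of_ne_zero (by rintro rfl; omega)
  nlinarith

end Nat

theorem stmt11_general (a b : ℕ) (hb : 2 ≤ b) (hcop : Nat.Coprime a b)
    (hodd : Odd a) :
    ((∃! p : ℕ × ℕ, 1 ≤ p.1 ∧ 1 ≤ p.2 ∧ a * p.1 + b * p.2 = (a+1)*b/2 + 1) ∧
      ¬ (∃ x y : ℕ, 1 ≤ x ∧ 1 ≤ y ∧ a * x + b * y = (a+1)*b/2 - 1)) ∨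
    ((¬ (∃ x y : ℕ, 1 ≤ x ∧ 1 ≤ y ∧ a * x + b * y = (a+1)*b/2 + 1)) ∧
      (∃! p : ℕ × ℕ, 1 ≤ p.1 ∧ 1 ≤ p.2 ∧ a * p.1 + b * p.2 = (a+1)*b/2 - 1)) := by
  obtain ⟨m, hm⟩ := hodd
  have hN : (a + 1) * b / 2 = (m + 1) * b := by
    rw [hm, show (2 * m + 1 + 1) * b = 2 * ((m + 1) * b) by ring]
    exact Nat.mul_div_cancel_left _ two_pos
  rw [hN]
  have h2N : (m + 1) * b + (m + 1) * b = a * b + b := by rw [hm]; ring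
  have hbN : b ≤ (m + 1) * b := Nat.le_mul_of_pos_left b m.succ_pos
  have hNb : (m + 1) * b ≡ 0 [MOD b] := Nat.modEq_zero_iff_dvd.2 (dvd_mul_left b _)
  obtain ⟨x₁, hx₁, hx₁b, hinv⟩ := Nat.exists_pos_mul_modEq_one hcop hb
  have hplus : a * x₁ ≡ (m + 1) * b + 1 [MOD b] := by
    simpa using hinv.trans (hNb.add_right 1).symm
  have hminus : a * (b - x₁) ≡ (m + 1) * b - 1 [MOD b] := by
    refine Nat.ModEq.add_right_cancel hinv ?_
    rw [← mul_add, Nat.sub_add_cancel hx₁b.le, Nat.sub_add_cancel (by omega)]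
    exact (Nat.modEq_zero_iff_dvd.2 (dvd_mul_left b a)).trans hNb.symm
  by_cases h : a * x₁ < (m + 1) * b + 1
  · have hsolPlus := (Nat.exists_pos_repr_iff hcop hx₁ hx₁b.le hplus).2 h
    refine Or.inl ⟨Nat.existsUnique_pos_repr hcop (by omega) (by omega) hsolPlus, ?_⟩
    rintro ⟨x', y', hx', hy', h'⟩
    obtain ⟨x, y, hx, hy, hxy⟩ := hsolPlus
    exact Nat.pos_repr_add_ne hcop hx hy hx' hy' (by omega)
  · have hsolMinus := (Nat.exists_pos_repr_iff hcop (by omega) (Nat.sub_le b x₁) hminus).2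
      (by rw [Nat.mul_sub]; omega)
    exact Or.inr ⟨fun hsol => h ((Nat.exists_pos_repr_iff hcop hx₁ hx₁b.le hplus).1 hsol),
      Nat.existsUnique_pos_repr hcop (by omega) (by omega) hsolMinus⟩

theorem stmt11 (a b : ℕ) (ha : 0 < a) (hb : 2 ≤ b) (hcop : Nat.Coprime a b)
    (hodd : Odd a) :
    ((∃! p : ℕ × ℕ, 1 ≤ p.1 ∧ 1 ≤ p.2 ∧ a * p.1 + b * p.2 = (a+1)*b/2 + 1) ∧
      ¬ (∃ x y : ℕ, 1 ≤ x ∧ 1 ≤ y ∧ a * x + b * y = (a+1)*b/2 - 1)) ∨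
    ((¬ (∃ x y : ℕ, 1 ≤ x ∧ 1 ≤ y ∧ a * x + b * y = (a+1)*b/2 + 1)) ∧
      (∃! p : ℕ × ℕ, 1 ≤ p.1 ∧ 1 ≤ p.2 ∧ a * p.1 + b * p.2 = (a+1)*b/2 - 1)) :=
  stmt11_general a b hb hcop hodd
end

section
/- Let a, b be coprime positive integers and n an integer. If there exist integers r, s with r < b, s ≤ 0, and r·a + s·b = n, then there are no positive integers x, y with x·a + y·b = n. -/
theorem stmt12 (a b : ℕ) (ha : 0 < a) (hb : 0 < b) (hcop : Nat.Coprime a b)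
    (n r s : ℤ) (hr : r < b) (hs : s ≤ 0) (h : r * a + s * b = n) :
    ¬ ∃ x y : ℤ, 0 < x ∧ 0 < y ∧ x * a + y * b = n := by
  rintro ⟨x, y, hx, hy, hxy⟩
  have key : (x - r) * a = (s - y) * b := by linarith
  have hcop' : IsCoprime (a : ℤ) (b : ℤ) := by
    rw [Int.isCoprime_iff_gcd_eq_one]
    exact_mod_cast hcop
  have hdvd : (b : ℤ) ∣ (x - r) := by
    have : (b : ℤ) ∣ (x - r) * a := ⟨s - y, by linarith⟩
    exact (IsCoprime.dvd_of_dvd_mul_right hcop'.symm this)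
  obtain ⟨k, hk⟩ := hdvd
  have ha' : (0:ℤ) < a := by exact_mod_cast ha
  have hb' : (0:ℤ) < b := by exact_mod_cast hb
  have h1 : (s - y) * b < 0 := mul_neg_of_neg_of_pos (by linarith) hb'
  have hneg : x - r < 0 := by
    by_contra h'
    push_neg at h'
    have := mul_nonneg h' ha'.le
    linarith
  have hk0 : k < 0 := by
    by_contra h'
    push_neg at h'
    have := mul_nonneg hb'.le h'
    linarith
  have hkle : (b:ℤ) * k ≤ (b:ℤ) * (-1) :=
    mul_le_mul_of_nonneg_left (by linarith) hb'.le
  linarith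
end
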